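/- arXiv:1110.4620 — 2 statements merged into one kernel-verified Lean document; each statement's English description precedes it below -/
import Mathlib

section
/- Let μ and ν be Borel probability measures on a Polish space Σ with ν ≪ μ, let ξ be a Borel probability measure on [0,∞) with mean 1 and finite exponential moments, and let Λ_ξ*(x) = sup_{α∈ℝ} {αx − log ∫ e^{αw} ξ(dw)}. Then for any Borel probability measure ρ on [0,∞)×Σ whose second marginal is μ and whose disintegration kernels ρ_x satisfy ∫ w ρ_x(dw) = dν/dμ(x) for μ-a.e. x, one has ∫_Σ H(ρ_x | ξ) μ(dx) ≥ ∫_Σ Λ_ξ*(dν/dμ(x)) μ(dx), where H denotes relative entropy. -/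
/-!
For each `x` this is the Donsker–Varadhan inequality: Gibbs' inequality `H(p | ξ_α) ≥ 0` for the
exponential tilt `ξ_α(dw) ∝ e^{α w} ξ(dw)` reads `α ∫ w ∂p - Λ_ξ(α) ≤ H(p | ξ)`; take the
supremum over `α` and use `∫ w ∂(κ x) = dν/dμ(x)`. When `H(p | ξ) < ∞`, the identity is
`p`-integrable by the Young inequality `x y ≤ eˣ + y log y - y` and the exponential moments of `ξ`.
-/

open MeasureTheory ENNReal NNReal Filter

/-- Log-moment generating function of a measure on ℝ. -/
noncomputable def logMGF (ξ : Measure ℝ) (α : ℝ) : ℝ :=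
  Real.log (∫ x, Real.exp (α * x) ∂ξ)

/-- Legendre (Fenchel) transform, valued in `ℝ≥0∞`. -/
noncomputable def legendre (Λ : ℝ → ℝ) (x : ℝ) : ℝ≥0∞ :=
  ⨆ α : ℝ, ENNReal.ofReal (α * x - Λ α)

open scoped Classical in
noncomputable def relEntropy {Ω : Type*} [MeasurableSpace Ω] (ν ξ : Measure Ω) : ℝ≥0∞ :=
  if ν ≪ ξ ∧ Integrable (fun x => Real.log (ν.rnDeriv ξ x).toReal) ν
  then ENNReal.ofReal (∫ x, Real.log (ν.rnDeriv ξ x).toReal ∂ν) else ⊤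

open InformationTheory

lemma mul_le_exp_add_klFun_sub_one (x : ℝ) {y : ℝ} (hy : 0 ≤ y) :
    x * y ≤ Real.exp x + klFun y - 1 := by
  rcases hy.eq_or_lt with rfl | hy
  · simpa [klFun_zero] using (Real.exp_pos x).le
  have h := Real.add_one_le_exp (x - Real.log y)
  rw [Real.exp_sub, Real.exp_log hy, le_div_iff₀ hy] at h
  rw [klFun_apply]
  nlinarith

section Entropy

variable {Ω : Type*} {mΩ : MeasurableSpace Ω} {μ ν : Measure Ω}

lemma integrable_of_integrable_llr_of_integrable_exp_abs [IsFiniteMeasure μ] [IsFiniteMeasure ν]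
    (hμν : μ ≪ ν) (h_int : Integrable (llr μ ν) μ) {f : Ω → ℝ}
    (hf : AEStronglyMeasurable f ν) (hexp : Integrable (fun x ↦ Real.exp |f x|) ν) :
    Integrable f μ := by
  rw [← integrable_toReal_rnDeriv_mul_iff hμν]
  refine (hexp.add ((integrable_klFun_rnDeriv_iff hμν).2 h_int)).mono'
    ((Measure.measurable_rnDeriv μ ν).ennreal_toReal.aestronglyMeasurable.mul hf)
    (ae_of_all _ fun x ↦ ?_)
  have hr : 0 ≤ (μ.rnDeriv ν x).toReal := ENNReal.toReal_nonneg
  rw [Pi.add_apply, Real.norm_eq_abs, abs_mul, abs_of_nonneg hr, mul_comm]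
  linarith [mul_le_exp_add_klFun_sub_one |f x| hr]

lemma integral_sub_log_integral_exp_le_integral_llr [IsProbabilityMeasure μ] [SigmaFinite ν]
    (hμν : μ ≪ ν) (h_int : Integrable (llr μ ν) μ) {f : Ω → ℝ} (hfμ : Integrable f μ)
    (hfν : Integrable (fun x ↦ Real.exp (f x)) ν) :
    ∫ x, f x ∂μ - Real.log (∫ x, Real.exp (f x) ∂ν) ≤ ∫ x, llr μ ν x ∂μ := by
  have : NeZero ν := ⟨fun hν ↦ IsProbabilityMeasure.ne_zero μ
    (Measure.absolutelyContinuous_zero_iff.1 (hν ▸ hμν))⟩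
  have : IsProbabilityMeasure (ν.tilted f) := isProbabilityMeasure_tilted hfν
  have h_gibbs := integral_llr_add_sub_measure_univ_nonneg
    (hμν.trans (absolutelyContinuous_tilted hfν)) (integrable_llr_tilted_right hμν hfμ h_int hfν)
  rw [integral_llr_tilted_right hμν hfμ hfν h_int] at h_gibbs
  simp only [probReal_univ, add_sub_cancel_right] at h_gibbs
  linarith

end Entropy

lemma legendre_logMGF_integral_le_relEntropy (p ξ : Measure ℝ) [IsProbabilityMeasure p]
    [IsProbabilityMeasure ξ] (hξexp : ∀ α : ℝ, Integrable (fun x ↦ Real.exp (α * x)) ξ) :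
    legendre (logMGF ξ) (∫ w, w ∂p) ≤ relEntropy p ξ := by
  rw [relEntropy]
  split_ifs with h
  · obtain ⟨hpξ, h_int⟩ := h
    have hexp_abs : Integrable (fun w ↦ Real.exp |w|) ξ :=
      ((hξexp 1).add (hξexp (-1))).mono' (by fun_prop) (ae_of_all _ fun w ↦ by
        simpa [Real.norm_eq_abs] using Real.exp_abs_le w)
    have hid : Integrable (fun w ↦ w) p :=
      integrable_of_integrable_llr_of_integrable_exp_abs hpξ h_int
        aestronglyMeasurable_id hexp_abs
    refine iSup_le fun α ↦ ENNReal.ofReal_le_ofReal ?_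
    have h_dv := integral_sub_log_integral_exp_le_integral_llr hpξ h_int (hid.const_mul α)
      (hξexp α)
    rwa [integral_const_mul] at h_dv
  · exact le_top

theorem stmt0_general {S : Type*} [MeasurableSpace S]
    (μ ν : Measure S)
    (ξ : Measure ℝ) [IsProbabilityMeasure ξ]
    (hξexp : ∀ α : ℝ, Integrable (fun x => Real.exp (α * x)) ξ)
    (κ : ProbabilityTheory.Kernel S ℝ) [ProbabilityTheory.IsMarkovKernel κ]
    (hmean : ∀ᵐ x ∂μ, ∫ w, w ∂(κ x) = (ν.rnDeriv μ x).toReal) :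
    ∫⁻ x, legendre (logMGF ξ) ((ν.rnDeriv μ x).toReal) ∂μ
      ≤ ∫⁻ x, relEntropy (κ x) ξ ∂μ := by
  refine lintegral_mono_ae ?_
  filter_upwards [hmean] with x hx
  rw [← hx]
  exact legendre_logMGF_integral_le_relEntropy (κ x) ξ hξexp

theorem stmt0 {S : Type*} [MetricSpace S] [CompleteSpace S]
    [TopologicalSpace.SeparableSpace S] [MeasurableSpace S] [BorelSpace S]
    (μ ν : Measure S) [IsProbabilityMeasure μ] [IsProbabilityMeasure ν]
    (hνμ : ν ≪ μ)
    (ξ : Measure ℝ) [IsProbabilityMeasure ξ]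
    (hξ0 : ξ (Set.Iio 0) = 0) (hξmean : ∫ x, x ∂ξ = 1)
    (hξexp : ∀ α : ℝ, Integrable (fun x => Real.exp (α * x)) ξ)
    (κ : ProbabilityTheory.Kernel S ℝ) [ProbabilityTheory.IsMarkovKernel κ]
    (ρ : Measure (S × ℝ)) [IsProbabilityMeasure ρ]
    (hρ : ρ = μ.compProd κ)
    (hκ0 : ∀ᵐ x ∂μ, (κ x) (Set.Iio 0) = 0)
    (hmean : ∀ᵐ x ∂μ, ∫ w, w ∂(κ x) = (ν.rnDeriv μ x).toReal) :
    ∫⁻ x, legendre (logMGF ξ) ((ν.rnDeriv μ x).toReal) ∂μ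
      ≤ ∫⁻ x, relEntropy (κ x) ξ ∂μ :=
  stmt0_general μ ν ξ hξexp κ hmean
end

section
/- Let (M_1^n,…,M_n^n) be obtained from independent Poisson(m/n) random variables (Z_1^n,…,Z_n^n) by the following coupling: if ΣZ_i = m set M_i = Z_i; if ΣZ_i > m remove ΣZ_i − m balls chosen uniformly at random from the urns with occupation numbers Z_i; if ΣZ_i < m add m − ΣZ_i balls to urns chosen independently and uniformly. Then (M_1^n,…,M_n^n) has the Multinomial(m, (1/n,…,1/n)) distribution. -/
open MeasureTheory ENNReal NNReal Filter

noncomputable def removeOne {n : ℕ} (z : Fin n → ℕ) : Measure (Fin n → ℕ) :=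
  ∑ i, (((z i : ℝ≥0∞)) / ((∑ j, z j : ℕ) : ℝ≥0∞)) • Measure.dirac (Function.update z i (z i - 1))

noncomputable def addOne {n : ℕ} (z : Fin n → ℕ) : Measure (Fin n → ℕ) :=
  ∑ i, ((n : ℝ≥0∞))⁻¹ • Measure.dirac (Function.update z i (z i + 1))

open scoped Classical in
noncomputable def adjust {n : ℕ} (m : ℕ) (z : Fin n → ℕ) : Measure (Fin n → ℕ) :=
  if m ≤ ∑ i, z i
  then (fun μ => μ.bind removeOne)^[(∑ i, z i) - m] (Measure.dirac z)
  else (fun μ => μ.bind addOne)^[m - ∑ i, z i] (Measure.dirac z)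

noncomputable def multinomialUniform (m n : ℕ) [NeZero n] : Measure (Fin n → ℕ) :=
  Measure.map (fun f : Fin m → Fin n => fun i => (Finset.univ.filter fun j => f j = i).card)
    ((PMF.uniformOfFintype (Fin m → Fin n)).toMeasure)

/-!
Let `P` be the law of i.i.d. Poisson(r) counts in `n` urns. The Poisson weights satisfy the
detailed balance identity `(z i + 1) P {z + e i} = r P {z}`, which says that adding a ball to a
uniform urn and removing a uniformly chosen ball are adjoint moves between the slices
`{∑ z = k}` and `{∑ z = k + 1}` of `P`. Since Multinomial(k + 1) arises from Multinomial(k) by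
adding a ball, the first half shows that `P` restricted to `{∑ z = k}` is
`Poisson(n r){k} • Multinomial(k)`; the second half, with this identification, shows that
removing a ball from Multinomial(k + 1) gives Multinomial(k). So on the event `∑ Z = k` the
coupling produces Multinomial(m) whatever `k` is.
-/

open MeasureTheory ProbabilityTheory Function

namespace MeasureTheory.Measure

variable {α β γ : Type*} [MeasurableSpace α] [MeasurableSpace β] [MeasurableSpace γ]

lemma tsum_apply_singleton [Countable α] [MeasurableSingletonClass α] (μ : Measure α) :
    ∑' a, μ {a} = μ Set.univ := by
  simpa using tsum_indicator_apply_singleton μ Set.univ MeasurableSet.univ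

lemma bind_apply_singleton [Countable α] [MeasurableSingletonClass α]
    [MeasurableSingletonClass β] (μ : Measure α) (κ : α → Measure β) (b : β) :
    μ.bind κ {b} = ∑' a, μ {a} * κ a {b} := by
  rw [bind_apply (measurableSet_singleton b) (measurable_of_countable κ).aemeasurable,
    lintegral_countable']
  exact tsum_congr fun a => mul_comm _ _

lemma bind_eq_sum_smul [Countable α] [MeasurableSingletonClass α] (μ : Measure α)
    (κ : α → Measure β) : μ.bind κ = sum fun a => μ {a} • κ a := by
  conv_lhs => rw [← sum_smul_dirac μ]
  rw [bind_sum _ _ (measurable_of_countable κ).aemeasurable]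
  simp_rw [bind_smul, dirac_bind (measurable_of_countable κ)]

lemma bind_map {g : α → β} {κ : β → Measure γ} (hg : Measurable g) (hκ : Measurable κ)
    (μ : Measure α) : (μ.map g).bind κ = μ.bind (κ ∘ g) := by
  rw [bind, bind, map_map hκ hg]

lemma map_bind {κ : α → Measure β} {g : β → γ} (hκ : Measurable κ) (hg : Measurable g)
    (μ : Measure α) : (μ.bind κ).map g = μ.bind fun a => (κ a).map g := by
  rw [bind, bind, ← join_map_map hg, map_map (measurable_map g hg) hκ]
  rfl

lemma bind_iterate_bind_dirac {κ : α → Measure α} (hκ : Measurable κ) (d : ℕ) (μ : Measure α) :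
    μ.bind (fun a => (·.bind κ)^[d] (dirac a)) = (·.bind κ)^[d] μ := by
  induction d with
  | zero => exact bind_dirac
  | succ d ih =>
    have hiter : Measurable fun a => (·.bind κ)^[d] (dirac a) :=
      ((measurable_bind' hκ).iterate d).comp measurable_dirac
    simp only [iterate_succ_apply']
    rw [← ih, bind_bind hiter.aemeasurable hκ.aemeasurable]

lemma eq_of_smul_eq_smul {c : ℝ≥0∞} (h0 : c ≠ 0) (htop : c ≠ ∞) {μ ν : Measure α}
    (h : c • μ = c • ν) : μ = ν := by
  simpa [smul_smul, ENNReal.inv_mul_cancel h0 htop] using congrArg (c⁻¹ • ·) h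

end MeasureTheory.Measure

section Multinomial

variable {n : ℕ}

def urnCounts {k : ℕ} (f : Fin k → Fin n) : Fin n → ℕ :=
  fun i => (Finset.univ.filter fun j => f j = i).card

lemma urnCounts_snoc {k : ℕ} (f : Fin k → Fin n) (a : Fin n) :
    urnCounts (Fin.snoc f a) = update (urnCounts f) a (urnCounts f a + 1) := by
  funext i
  rw [urnCounts, Finset.card_filter, Fin.sum_univ_castSucc]
  simp only [Fin.snoc_castSucc, Fin.snoc_last, ← Finset.card_filter]
  rcases eq_or_ne i a with rfl | h
  · simp [urnCounts]
  · simp [urnCounts, update_of_ne h, Ne.symm h]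

lemma sum_urnCounts {k : ℕ} (f : Fin k → Fin n) : ∑ i, urnCounts f i = k := by
  simpa [urnCounts] using (Finset.card_eq_sum_card_fiberwise (s := Finset.univ)
    (t := Finset.univ) fun x _ => Finset.mem_univ (f x)).symm

lemma PMF.uniformOfFintype_toMeasure_singleton {A : Type*} [Fintype A] [Nonempty A]
    [MeasurableSpace A] [MeasurableSingletonClass A] (a : A) :
    (PMF.uniformOfFintype A).toMeasure {a} = (Fintype.card A : ℝ≥0∞)⁻¹ := by
  rw [PMF.toMeasure_apply_singleton _ _ (measurableSet_singleton a), PMF.uniformOfFintype_apply]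

variable [NeZero n]

lemma multinomialUniform_eq_map_urnCounts (k : ℕ) :
    multinomialUniform k n = (PMF.uniformOfFintype (Fin k → Fin n)).toMeasure.map urnCounts :=
  rfl

lemma uniformOfFintype_bind_map_snoc (k : ℕ) :
    (PMF.uniformOfFintype (Fin k → Fin n)).toMeasure.bind
        (fun f => (PMF.uniformOfFintype (Fin n)).toMeasure.map (Fin.snoc f)) =
      (PMF.uniformOfFintype (Fin (k + 1) → Fin n)).toMeasure := by
  refine Measure.ext_iff_singleton.2 fun h => ?_
  have hpre (f : Fin k → Fin n) : Fin.snoc (α := fun _ => Fin n) f ⁻¹' {h} =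
      if f = Fin.init h then {h (Fin.last k)} else ∅ := by
    ext a
    split_ifs with hf
    · simp [hf, funext_iff, Fin.forall_fin_succ', Fin.init]
    · simp only [Set.mem_preimage, Set.mem_singleton_iff, Set.mem_empty_iff_false, iff_false]
      rintro rfl
      exact hf (Fin.init_snoc (α := fun _ => Fin n) a f).symm
  simp_rw [Measure.bind_apply_singleton,
    Measure.map_apply (measurable_of_countable _) (measurableSet_singleton _), hpre]
  rw [tsum_eq_single (Fin.init h) fun f hf => by simp [hf]]
  simp only [if_true, PMF.uniformOfFintype_toMeasure_singleton, Fintype.card_fun,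
    Fintype.card_fin, pow_succ, Nat.cast_mul, Nat.cast_pow]
  rw [ENNReal.mul_inv (by simp) (by simp)]

lemma addOne_eq_map (z : Fin n → ℕ) :
    addOne z = (PMF.uniformOfFintype (Fin n)).toMeasure.map fun a => update z a (z a + 1) := by
  refine Measure.ext_iff_singleton.2 fun v => ?_
  rw [Measure.map_apply (measurable_of_countable _) (measurableSet_singleton _),
    PMF.toMeasure_apply_fintype, addOne, Measure.finsetSum_apply]
  refine Finset.sum_congr rfl fun i _ => ?_
  by_cases hiv : update z i (z i + 1) = v <;> simp [hiv]

lemma multinomialUniform_succ (k : ℕ) :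
    multinomialUniform (k + 1) n = (multinomialUniform k n).bind addOne := by
  have hadd : addOne ∘ urnCounts = fun f : Fin k → Fin n =>
      ((PMF.uniformOfFintype (Fin n)).toMeasure.map (Fin.snoc f)).map urnCounts := by
    funext f
    rw [comp_apply, addOne_eq_map,
      Measure.map_map (measurable_of_countable _) (measurable_of_countable _)]
    congr 1
    funext a
    rw [comp_apply, urnCounts_snoc]
  rw [multinomialUniform_eq_map_urnCounts, multinomialUniform_eq_map_urnCounts,
    Measure.bind_map (measurable_of_countable _) (measurable_of_countable _), hadd,
    ← Measure.map_bind (measurable_of_countable _) (measurable_of_countable _),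
    uniformOfFintype_bind_map_snoc]

lemma multinomialUniform_zero : multinomialUniform 0 n = Measure.dirac 0 := by
  have : (urnCounts : (Fin 0 → Fin n) → Fin n → ℕ) = fun _ => 0 := by
    funext f i
    simp [urnCounts]
  rw [multinomialUniform_eq_map_urnCounts, this, Measure.map_const, measure_univ, one_smul]

end Multinomial

lemma poissonMeasure_succ_mul (r : ℝ≥0) (x : ℕ) :
    ((x + 1 : ℕ) : ℝ≥0∞) * poissonMeasure r {x + 1} = r * poissonMeasure r {x} := by
  rw [poissonMeasure_singleton, poissonMeasure_singleton, ← ENNReal.ofReal_natCast,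
    ← ENNReal.ofReal_coe_nnreal, ← ENNReal.ofReal_mul (by positivity),
    ← ENNReal.ofReal_mul (by positivity), Nat.factorial_succ]
  congr 1
  push_cast
  field_simp
  ring

section UrnMoves

variable {n : ℕ}

lemma update_pred_eq_iff {w v : Fin n → ℕ} {i : Fin n} :
    (0 < w i ∧ update w i (w i - 1) = v) ↔ update v i (v i + 1) = w := by
  constructor
  · rintro ⟨hpos, rfl⟩
    rw [update_self, update_idem, Nat.sub_add_cancel hpos, update_eq_self]
  · rintro rfl
    simp

lemma sum_update_succ (v : Fin n → ℕ) (i : Fin n) :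
    ∑ j, update v i (v i + 1) j = ∑ j, v j + 1 := by
  rw [Finset.sum_update_of_mem (Finset.mem_univ i),
    Finset.sum_eq_add_sum_sdiff_singleton_of_mem (Finset.mem_univ i)]
  ring

lemma removeOne_singleton (w v : Fin n → ℕ) :
    removeOne w {v} =
      ∑ i, if update w i (w i - 1) = v then (w i : ℝ≥0∞) / (∑ j, w j : ℕ) else 0 := by
  rw [removeOne, Measure.finsetSum_apply]
  refine Finset.sum_congr rfl fun i _ => ?_
  split_ifs with h <;> simp [h]

lemma addOne_singleton (v w : Fin n → ℕ) :
    addOne v {w} = ∑ i, if update v i (v i + 1) = w then (n : ℝ≥0∞)⁻¹ else 0 := by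
  rw [addOne, Measure.finsetSum_apply]
  refine Finset.sum_congr rfl fun i _ => ?_
  split_ifs with h <;> simp [h]

lemma removeOne_univ {w : Fin n → ℕ} (hw : ∑ j, w j ≠ 0) : removeOne w Set.univ = 1 := by
  simp only [removeOne, Measure.finsetSum_apply, Measure.smul_apply, measure_univ, smul_eq_mul,
    mul_one, div_eq_mul_inv, ← Finset.sum_mul, ← Nat.cast_sum]
  exact ENNReal.mul_inv_cancel (by exact_mod_cast hw) (ENNReal.natCast_ne_top _)

lemma addOne_univ [NeZero n] (v : Fin n → ℕ) : addOne v Set.univ = 1 := by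
  simp only [addOne, Measure.finsetSum_apply, Measure.smul_apply, measure_univ, smul_eq_mul,
    mul_one, Finset.sum_const, Finset.card_univ, Fintype.card_fin, nsmul_eq_mul]
  exact ENNReal.mul_inv_cancel (NeZero.ne _) (ENNReal.natCast_ne_top n)

end UrnMoves

section PoissonVector

variable (n : ℕ) (r : ℝ≥0)

noncomputable def poissonVec : Measure (Fin n → ℕ) :=
  Measure.pi fun _ => poissonMeasure r

noncomputable def poissonSlice (k : ℕ) : Measure (Fin n → ℕ) :=
  (poissonVec n r).restrict {z | ∑ i, z i = k}

variable {n r}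

lemma poissonVec_singleton (z : Fin n → ℕ) :
    poissonVec n r {z} = ∏ i, poissonMeasure r {z i} := by
  rw [poissonVec, ← Set.univ_pi_singleton z, Measure.pi_pi]

lemma poissonVec_update_succ (z : Fin n → ℕ) (i : Fin n) :
    ((z i + 1 : ℕ) : ℝ≥0∞) * poissonVec n r {update z i (z i + 1)} = r * poissonVec n r {z} := by
  simp only [poissonVec_singleton, apply_update (fun _ x => poissonMeasure r {x}),
    Finset.prod_update_of_mem (Finset.mem_univ i),
    Finset.prod_eq_mul_prod_sdiff_singleton_of_mem (Finset.mem_univ i)]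
  rw [← mul_assoc, ← mul_assoc, poissonMeasure_succ_mul]

lemma poissonSlice_singleton (k : ℕ) (w : Fin n → ℕ) :
    poissonSlice n r k {w} = if ∑ i, w i = k then poissonVec n r {w} else 0 := by
  rw [poissonSlice, Measure.restrict_apply (measurableSet_singleton w)]
  split_ifs with h
  · rw [Set.singleton_inter_of_mem (s := {z : Fin n → ℕ | ∑ i, z i = k}) h]
  · rw [Set.singleton_inter_of_notMem (s := {z : Fin n → ℕ | ∑ i, z i = k}) h, measure_empty]

lemma sum_poissonSlice : Measure.sum (poissonSlice n r) = poissonVec n r := by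
  refine Measure.ext_iff_singleton.2 fun w => ?_
  rw [Measure.sum_apply _ (measurableSet_singleton w), tsum_eq_single (∑ i, w i) fun k hk => by
    rw [poissonSlice_singleton, if_neg (Ne.symm hk)], poissonSlice_singleton, if_pos rfl]

lemma poissonSlice_detailed_balance (k : ℕ) (v w : Fin n → ℕ) :
    ((k + 1 : ℕ) : ℝ≥0∞) * poissonSlice n r (k + 1) {w} * removeOne w {v} =
      ((n * r : ℝ≥0) : ℝ≥0∞) * poissonSlice n r k {v} * addOne v {w} := by
  simp only [removeOne_singleton, addOne_singleton, Finset.mul_sum]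
  refine Finset.sum_congr rfl fun i _ => ?_
  by_cases hvw : update v i (v i + 1) = w
  · subst hvw
    rw [if_pos (update_pred_eq_iff.2 rfl).2, if_pos rfl, poissonSlice_singleton,
      poissonSlice_singleton, sum_update_succ, update_self]
    by_cases hv : ∑ j, v j = k
    · rw [if_pos (by rw [hv]), if_pos hv, hv, mul_comm _ (_ / _), ← mul_assoc,
        ENNReal.div_mul_cancel (by positivity) (ENNReal.natCast_ne_top _), poissonVec_update_succ,
        ENNReal.coe_mul, ENNReal.coe_natCast, mul_right_comm, mul_right_comm (n : ℝ≥0∞),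
        ENNReal.mul_inv_cancel (by exact_mod_cast i.pos.ne') (ENNReal.natCast_ne_top n), one_mul]
    · rw [if_neg (by omega), if_neg hv]
      simp
  · rw [if_neg hvw, mul_zero]
    split_ifs with hwv
    · have hwi : w i = 0 := by
        by_contra hwi
        exact hvw (update_pred_eq_iff.1 ⟨Nat.pos_of_ne_zero hwi, hwv⟩)
      simp [hwi]
    · rw [mul_zero]

lemma poissonSlice_bind_removeOne [NeZero n] (k : ℕ) :
    ((k + 1 : ℕ) : ℝ≥0∞) • (poissonSlice n r (k + 1)).bind removeOne =
      ((n * r : ℝ≥0) : ℝ≥0∞) • poissonSlice n r k := by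
  refine Measure.ext_iff_singleton.2 fun v => ?_
  rw [Measure.smul_apply, Measure.smul_apply, smul_eq_mul, smul_eq_mul,
    Measure.bind_apply_singleton, ← ENNReal.tsum_mul_left]
  simp_rw [← mul_assoc, poissonSlice_detailed_balance]
  rw [ENNReal.tsum_mul_left, Measure.tsum_apply_singleton, addOne_univ, mul_one]

lemma poissonSlice_bind_addOne (k : ℕ) :
    ((n * r : ℝ≥0) : ℝ≥0∞) • (poissonSlice n r k).bind addOne =
      ((k + 1 : ℕ) : ℝ≥0∞) • poissonSlice n r (k + 1) := by
  refine Measure.ext_iff_singleton.2 fun w => ?_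
  rw [Measure.smul_apply, Measure.smul_apply, smul_eq_mul, smul_eq_mul,
    Measure.bind_apply_singleton, ← ENNReal.tsum_mul_left]
  simp_rw [← mul_assoc, ← poissonSlice_detailed_balance]
  rw [ENNReal.tsum_mul_left, Measure.tsum_apply_singleton, poissonSlice_singleton]
  split_ifs with hw
  · rw [removeOne_univ (by omega), mul_one]
  · simp

lemma poissonSlice_eq_smul_multinomialUniform [NeZero n] (k : ℕ) :
    poissonSlice n r k = poissonMeasure (n * r) {k} • multinomialUniform k n := by
  induction k with
  | zero =>
    have hzero : {z : Fin n → ℕ | ∑ i, z i = 0} = {0} := by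
      ext z
      simp [Finset.sum_eq_zero_iff, funext_iff]
    rw [poissonSlice, hzero, Measure.restrict_singleton, multinomialUniform_zero,
      poissonVec_singleton]
    congr 1
    simp [poissonMeasure_singleton, ← ENNReal.ofReal_pow (Real.exp_nonneg _), ← Real.exp_nat_mul]
  | succ k ih =>
    refine Measure.eq_of_smul_eq_smul (c := ((k + 1 : ℕ) : ℝ≥0∞)) (by positivity)
      (ENNReal.natCast_ne_top _) ?_
    rw [← poissonSlice_bind_addOne, ih, Measure.bind_smul, ← multinomialUniform_succ, smul_smul,
      smul_smul, poissonMeasure_succ_mul]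

end PoissonVector

section Coupling

variable {n : ℕ} [NeZero n]

lemma poissonVec_eq_bind_multinomialUniform (r : ℝ≥0) :
    poissonVec n r = (poissonMeasure (n * r)).bind fun k => multinomialUniform k n := by
  rw [Measure.bind_eq_sum_smul, ← sum_poissonSlice]
  exact congrArg Measure.sum (funext poissonSlice_eq_smul_multinomialUniform)

lemma multinomialUniform_succ_bind_removeOne (k : ℕ) :
    (multinomialUniform (k + 1) n).bind removeOne = multinomialUniform k n := by
  -- Any positive rate works: it makes the Poisson slices nonzero multiples of the multinomials.
  have hrate : 0 < (n * 1 : ℝ≥0) := by simpa using NeZero.pos n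
  have key := poissonSlice_bind_removeOne (n := n) (r := 1) k
  rw [poissonSlice_eq_smul_multinomialUniform, poissonSlice_eq_smul_multinomialUniform,
    Measure.bind_smul, smul_smul, smul_smul, poissonMeasure_succ_mul] at key
  refine Measure.eq_of_smul_eq_smul ?_ (ENNReal.mul_ne_top ENNReal.coe_ne_top
    (measure_ne_top _ _)) key
  rw [poissonMeasure_singleton]
  exact mul_ne_zero (by simpa using hrate.ne') (ENNReal.ofReal_pos.2 (by positivity)).ne'

lemma iterate_bind_addOne_multinomialUniform (k d : ℕ) :
    (·.bind addOne)^[d] (multinomialUniform k n) = multinomialUniform (k + d) n := by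
  induction d with
  | zero => rfl
  | succ d ih => rw [iterate_succ_apply', ih, ← multinomialUniform_succ, add_assoc]

lemma iterate_bind_removeOne_multinomialUniform (k d : ℕ) :
    (·.bind removeOne)^[d] (multinomialUniform (k + d) n) = multinomialUniform k n := by
  induction d with
  | zero => rfl
  | succ d ih => rw [iterate_succ_apply, ← add_assoc, multinomialUniform_succ_bind_removeOne, ih]

lemma multinomialUniform_bind_congr {k : ℕ} {κ κ' : (Fin n → ℕ) → Measure (Fin n → ℕ)}
    (h : ∀ z, ∑ i, z i = k → κ z = κ' z) :
    (multinomialUniform k n).bind κ = (multinomialUniform k n).bind κ' := by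
  rw [multinomialUniform_eq_map_urnCounts, Measure.bind_map (measurable_of_countable _)
    (measurable_of_countable _), Measure.bind_map (measurable_of_countable _)
    (measurable_of_countable _)]
  congr 1
  funext f
  exact h _ (sum_urnCounts f)

lemma multinomialUniform_bind_adjust (m k : ℕ) :
    (multinomialUniform k n).bind (adjust m) = multinomialUniform m n := by
  rcases le_or_gt m k with hmk | hkm
  · obtain ⟨d, rfl⟩ := Nat.exists_eq_add_of_le hmk
    rw [multinomialUniform_bind_congr (κ' := fun z => (·.bind removeOne)^[d] (Measure.dirac z))
      fun z hz => by rw [adjust, hz, if_pos hmk, Nat.add_sub_cancel_left],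
      Measure.bind_iterate_bind_dirac (measurable_of_countable _),
      iterate_bind_removeOne_multinomialUniform]
  · obtain ⟨d, rfl⟩ := Nat.exists_eq_add_of_lt hkm
    rw [multinomialUniform_bind_congr (κ' := fun z => (·.bind addOne)^[d + 1] (Measure.dirac z))
      fun z hz => by rw [adjust, hz, if_neg (by omega), add_assoc, Nat.add_sub_cancel_left],
      Measure.bind_iterate_bind_dirac (measurable_of_countable _),
      iterate_bind_addOne_multinomialUniform, add_assoc]

end Coupling

theorem stmt5 (n m : ℕ) [NeZero n] :
    (Measure.pi fun _ : Fin n => ProbabilityTheory.poissonMeasure ((m : ℝ≥0) / (n : ℝ≥0))).bind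
        (adjust m)
      = multinomialUniform m n := by
  change (poissonVec n (m / n)).bind (adjust m) = _
  rw [poissonVec_eq_bind_multinomialUniform, Measure.bind_bind
    (measurable_of_countable _).aemeasurable (measurable_of_countable _).aemeasurable]
  simp_rw [multinomialUniform_bind_adjust, Measure.bind_const, measure_univ, one_smul]
end
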